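/- arXiv:1210.6918 — 2 statements merged into one kernel-verified Lean document; each statement's English description precedes it below -/
import Mathlib

section
/- Let G = (V,E) be a finite simple graph containing no cycle of length 5 (as a subgraph, not necessarily induced), and let w : V → ℝ be a weight function such that G is w-well-covered. Then for every vertex v ∈ V \ L(G) with D(v) ≠ ∅, and for every maximal independent set M of the subgraph of G induced by D(v), w(v) = w(M). -/
/-!
Pick, for every `u ∈ N(v) \ D(v)`, a neighbour `y_u ∈ N₂(v)`. Two of these cannot be adjacent:
`v u_a y_a y_b u_b` would be a `C₅`. So they form an independent set `Y ⊆ N₂(v)`, which extends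
to a maximal independent set `S` of `G - N[v]`. Then `S ∪ {v}` is maximal independent, and so is
`S ∪ M`: no vertex of `D(v)` has a neighbour at distance `2` from `v`, the vertices of
`N(v) \ D(v)` are dominated by `Y ⊆ S`, and `v` by `M ≠ ∅`. Comparing weights gives `w(v) = w(M)`.
-/

namespace WC

variable {V : Type*}

/-- A set of vertices is independent if its elements are pairwise nonadjacent. -/
def IsIndep (G : SimpleGraph V) (S : Set V) : Prop :=
  S.Pairwise fun a b => ¬ G.Adj a b

/-- A maximal independent set: independent and not properly contained in another
independent set. -/
def IsMaxIndep (G : SimpleGraph V) (S : Set V) : Prop :=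
  IsIndep G S ∧ ∀ T : Set V, IsIndep G T → S ⊆ T → T = S

/-- A maximal independent set of the subgraph of `G` induced by `A`
(equivalently, a subset of `A`, independent in `G`, maximal among such). -/
def IsMaxIndepOn (G : SimpleGraph V) (A S : Set V) : Prop :=
  S ⊆ A ∧ IsIndep G S ∧ ∀ T : Set V, T ⊆ A → IsIndep G T → S ⊆ T → T = S

/-- The weight of a set of vertices: `w(S) = Σ_{s ∈ S} w(s)`. -/
noncomputable def wsum (w : V → ℝ) (S : Set V) : ℝ := ∑ᶠ x ∈ S, w x

/-- `G` is `w`-well-covered if all maximal independent sets have the same weight. -/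
def WWC (G : SimpleGraph V) (w : V → ℝ) : Prop :=
  ∀ S T : Set V, IsMaxIndep G S → IsMaxIndep G T → wsum w S = wsum w T

/-- `G` is well-covered if all maximal independent sets have the same cardinality. -/
def WellCovered (G : SimpleGraph V) : Prop :=
  ∀ S T : Set V, IsMaxIndep G S → IsMaxIndep G T → S.ncard = T.ncard

/-- `N(S)`, the set of vertices at distance exactly 1 from `S`. -/
def nbhd (G : SimpleGraph V) (S : Set V) : Set V :=
  {x | x ∉ S ∧ ∃ s ∈ S, G.Adj x s}

/-- `N[S]`, the set of vertices at distance at most 1 from `S`. -/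
def cnbhd (G : SimpleGraph V) (S : Set V) : Set V :=
  S ∪ {x | ∃ s ∈ S, G.Adj x s}

/-- `N₂(S)`, the set of vertices at distance exactly 2 from `S`. -/
def n2 (G : SimpleGraph V) (S : Set V) : Set V :=
  {x | x ∉ cnbhd G S ∧ ∃ y ∈ nbhd G S, G.Adj x y}

/-- `S` dominates `T` if `T ⊆ N[S]`. -/
def Dominates (G : SimpleGraph V) (S T : Set V) : Prop := T ⊆ cnbhd G S

/-- `D(v) = N(v) \ N(N₂(v))`. -/
def dSet (G : SimpleGraph V) (v : V) : Set V :=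
  G.neighborSet v \ nbhd G (n2 G {v})

/-- `L(G)`: vertices of degree 1, or of degree 2 lying on a triangle. -/
def lSet (G : SimpleGraph V) : Set V :=
  {v | (G.neighborSet v).ncard = 1 ∨
    ((G.neighborSet v).ncard = 2 ∧ ∃ a b, G.Adj v a ∧ G.Adj v b ∧ G.Adj a b)}

/-- `G` contains a cycle of length `k` as a (not necessarily induced) subgraph. -/
def HasCycleLen (G : SimpleGraph V) (k : ℕ) : Prop :=
  ∃ (u : V) (p : G.Walk u u), p.IsCycle ∧ p.length = k

/-- A vertex is simplicial if its closed neighborhood induces a complete subgraph. -/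
def Simplicial (G : SimpleGraph V) (v : V) : Prop :=
  ∀ a ∈ G.neighborSet v, ∀ b ∈ G.neighborSet v, a ≠ b → G.Adj a b

/-- `B` is an induced complete bipartite subgraph of `G` on (nonempty, disjoint)
parts `BX` and `BY`. -/
def IsCompleteBipartiteOn (G : SimpleGraph V) (BX BY : Set V) : Prop :=
  BX.Nonempty ∧ BY.Nonempty ∧ Disjoint BX BY ∧ IsIndep G BX ∧ IsIndep G BY ∧
    ∀ x ∈ BX, ∀ y ∈ BY, G.Adj x y

/-- `B` (on parts `BX`, `BY`) is a generating subgraph of `G`: there is an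
independent set `S` (a witness) such that `S ∪ BX` and `S ∪ BY` are both
maximal independent sets of `G`. -/
def IsGenerating (G : SimpleGraph V) (BX BY : Set V) : Prop :=
  ∃ S : Set V, IsIndep G S ∧ IsMaxIndep G (S ∪ BX) ∧ IsMaxIndep G (S ∪ BY)

/-- The edge `xy` is relating: there is an independent set `S` such that
`S ∪ {x}` and `S ∪ {y}` are both maximal independent sets of `G`. -/
def IsRelating (G : SimpleGraph V) (x y : V) : Prop :=
  G.Adj x y ∧ ∃ S : Set V, IsIndep G S ∧ IsMaxIndep G (S ∪ {x}) ∧ IsMaxIndep G (S ∪ {y})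

end WC

open WC

namespace WC

variable {V : Type*} {G : SimpleGraph V}

instance symm_not_adj : Std.Symm fun a b => ¬ G.Adj a b :=
  ⟨fun _ _ h h' => h h'.symm⟩

lemma isIndep_union {S T : Set V} :
    IsIndep G (S ∪ T) ↔ IsIndep G S ∧ IsIndep G T ∧ ∀ s ∈ S, ∀ t ∈ T, ¬ G.Adj s t := by
  refine Set.pairwise_union_of_symm.trans (and_congr_right' (and_congr_right' ?_))
  exact forall₂_congr fun s _ => forall₂_congr fun t _ =>
    ⟨fun h hst => h hst.ne hst, fun h _ => h⟩

lemma isMaxIndepOn_iff {A S : Set V} :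
    IsMaxIndepOn G A S ↔ S ⊆ A ∧ IsIndep G S ∧ ∀ x ∈ A, x ∉ S → ∃ s ∈ S, G.Adj x s := by
  refine and_congr_right fun hSA => and_congr_right fun hS => ⟨fun hmax x hxA hxS => ?_, ?_⟩
  · by_contra! hx
    have hins := hmax (insert x S) (Set.insert_subset hxA hSA)
      (Set.pairwise_insert_of_symm.2 ⟨hS, fun s hs _ => hx s hs⟩) (Set.subset_insert x S)
    exact hxS (hins ▸ Set.mem_insert x S)
  · intro hdom T hTA hT hST
    refine Set.Subset.antisymm (fun x hxT => ?_) hST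
    by_contra hxS
    obtain ⟨s, hs, hxs⟩ := hdom x (hTA hxT) hxS
    exact hT hxT (hST hs) hxs.ne hxs

lemma isMaxIndep_iff {S : Set V} :
    IsMaxIndep G S ↔ IsIndep G S ∧ ∀ x ∉ S, ∃ s ∈ S, G.Adj x s := by
  have hon : IsMaxIndep G S ↔ IsMaxIndepOn G Set.univ S := by
    simp [IsMaxIndep, IsMaxIndepOn]
  simp [hon, isMaxIndepOn_iff]

lemma IsMaxIndepOn.nonempty {A S : Set V} (hS : IsMaxIndepOn G A S) (hA : A.Nonempty) :
    S.Nonempty := by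
  obtain ⟨a, ha⟩ := hA
  by_contra hempty
  obtain ⟨s, hs, -⟩ :=
    (isMaxIndepOn_iff.1 hS).2.2 a ha fun haS => hempty ⟨a, haS⟩
  exact hempty ⟨s, hs⟩

lemma IsIndep.exists_isMaxIndepOn_superset [Finite V] {A Y : Set V} (hY : IsIndep G Y)
    (hYA : Y ⊆ A) : ∃ S, Y ⊆ S ∧ IsMaxIndepOn G A S := by
  obtain ⟨S, ⟨hSA, hS, hYS⟩, hmax⟩ :=
    Set.toFinite {T : Set V | T ⊆ A ∧ IsIndep G T ∧ Y ⊆ T} |>.exists_maximalFor id _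
      ⟨Y, hYA, hY, subset_rfl⟩
  exact ⟨S, hYS, hSA, hS, fun T hTA hT hST =>
    Set.Subset.antisymm (hmax ⟨hTA, hT, hYS.trans hST⟩ hST) hST⟩

lemma wsum_union [Finite V] (w : V → ℝ) {S T : Set V} (h : Disjoint S T) :
    wsum w (S ∪ T) = wsum w S + wsum w T :=
  finsum_mem_union h S.toFinite T.toFinite

lemma wsum_singleton (w : V → ℝ) (v : V) : wsum w {v} = w v :=
  finsum_mem_singleton

section Neighbourhoods

variable {v x : V}

lemma mem_nbhd_singleton : x ∈ nbhd G {v} ↔ G.Adj v x := by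
  simp only [nbhd, Set.mem_ofPred_eq, Set.mem_singleton_iff, exists_eq_left]
  exact ⟨fun h => h.2.symm, fun h => ⟨h.ne', h.symm⟩⟩

lemma notMem_cnbhd_singleton : x ∉ cnbhd G {v} ↔ x ≠ v ∧ ¬ G.Adj v x := by
  simp [cnbhd, G.adj_comm]

lemma neighborSet_subset_cnbhd : G.neighborSet v ⊆ cnbhd G {v} :=
  fun _ hx => Or.inr ⟨v, rfl, SimpleGraph.Adj.symm hx⟩

lemma mem_n2_singleton : x ∈ n2 G {v} ↔ x ∉ cnbhd G {v} ∧ ∃ u, G.Adj v u ∧ G.Adj x u := by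
  simp only [n2, Set.mem_ofPred_eq, mem_nbhd_singleton]

lemma not_adj_of_mem_dSet {d : V} (hd : d ∈ dSet G v) (hx : x ∉ cnbhd G {v}) :
    ¬ G.Adj d x := fun hdx =>
  hd.2 ⟨fun hd2 => hd2.1 (neighborSet_subset_cnbhd hd.1), x,
    mem_n2_singleton.2 ⟨hx, d, hd.1, hdx.symm⟩, hdx⟩

lemma exists_adj_mem_n2_of_notMem_dSet {u : V} (hu : G.Adj v u) (hu' : u ∉ dSet G v) :
    ∃ y ∈ n2 G {v}, G.Adj u y := by
  by_contra! h
  exact hu' ⟨hu, fun ⟨_, y, hy, huy⟩ => h y hy huy⟩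

end Neighbourhoods

lemma hasCycleLen_five_of_adj {a b c d e : V} (hab : G.Adj a b) (hbc : G.Adj b c)
    (hcd : G.Adj c d) (hde : G.Adj d e) (hea : G.Adj e a)
    (hac : a ≠ c) (had : a ≠ d) (hbd : b ≠ d) (hbe : b ≠ e) (hce : c ≠ e) :
    HasCycleLen G 5 := by
  have := hab.ne; have := hbc.ne; have := hcd.ne; have := hde.ne; have := hea.ne
  refine ⟨a, .cons hab (.cons hbc (.cons hcd (.cons hde (.cons hea .nil)))), ?_, rfl⟩
  simp [SimpleGraph.Walk.isCycle_def, SimpleGraph.Walk.isTrail_def]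
  aesop

lemma eq_of_adj_of_mem_n2 (h5 : ¬ HasCycleLen G 5) {v ya yb ua ub : V} (hya : ya ∈ n2 G {v}) (hyb : yb ∈ n2 G {v})
    (hab : G.Adj ya yb) (hua : G.Adj v ua) (hyua : G.Adj ua ya) (hub : G.Adj v ub)
    (hyub : G.Adj ub yb) : ua = ub := by
  by_contra hne
  obtain ⟨hyav, hvya⟩ := notMem_cnbhd_singleton.1 (mem_n2_singleton.1 hya).1
  obtain ⟨hybv, hvyb⟩ := notMem_cnbhd_singleton.1 (mem_n2_singleton.1 hyb).1
  exact h5 <| hasCycleLen_five_of_adj hua hyua hab hyub.symm hub.symm hyav.symm hybv.symm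
    (fun h => hvyb (h ▸ hua)) hne (fun h => hvya (h ▸ hub))

lemma exists_isIndep_subset_n2_dominating (h5 : ¬ HasCycleLen G 5) (v : V) :
    ∃ Y ⊆ n2 G {v}, IsIndep G Y ∧ ∀ u, G.Adj v u → u ∉ dSet G v → ∃ y ∈ Y, G.Adj u y := by
  choose! f hfn2 hfadj using fun u (hu : G.Adj v u ∧ u ∉ dSet G v) =>
    exists_adj_mem_n2_of_notMem_dSet hu.1 hu.2
  refine ⟨f '' {u | G.Adj v u ∧ u ∉ dSet G v}, ?_, ?_, ?_⟩
  · rintro _ ⟨u, hu, rfl⟩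
    exact hfn2 u hu
  · rintro _ ⟨ua, hua, rfl⟩ _ ⟨ub, hub, rfl⟩ hne hadj
    exact hne <| congrArg f <| eq_of_adj_of_mem_n2 h5 (hfn2 ua hua) (hfn2 ub hub) hadj
      hua.1 (hfadj ua hua) hub.1 (hfadj ub hub)
  · exact fun u hu hu' => ⟨f u, ⟨u, ⟨hu, hu'⟩, rfl⟩, hfadj u ⟨hu, hu'⟩⟩

section Extension

variable {v : V} {S : Set V}

lemma isMaxIndep_union_singleton (hS : IsMaxIndepOn G (cnbhd G {v})ᶜ S) :
    IsMaxIndep G (S ∪ {v}) := by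
  obtain ⟨hSA, hSI, hSdom⟩ := isMaxIndepOn_iff.1 hS
  refine isMaxIndep_iff.2 ⟨isIndep_union.2 ⟨hSI, Set.pairwise_singleton _ _, ?_⟩, ?_⟩
  · rintro s hs _ rfl hsv
    exact (notMem_cnbhd_singleton.1 (hSA hs)).2 hsv.symm
  · intro x hx
    by_cases hxv : G.Adj x v
    · exact ⟨v, Or.inr rfl, hxv⟩
    obtain ⟨s, hs, hxs⟩ := hSdom x
      (notMem_cnbhd_singleton.2 ⟨fun h => hx (Or.inr h), fun h => hxv h.symm⟩)
      fun h => hx (Or.inl h)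
    exact ⟨s, Or.inl hs, hxs⟩

lemma isMaxIndep_union_of_isMaxIndepOn_dSet (hS : IsMaxIndepOn G (cnbhd G {v})ᶜ S)
    (hdom : ∀ u, G.Adj v u → u ∉ dSet G v → ∃ s ∈ S, G.Adj u s) {M : Set V}
    (hM : IsMaxIndepOn G (dSet G v) M) (hD : (dSet G v).Nonempty) : IsMaxIndep G (S ∪ M) := by
  obtain ⟨hSA, hSI, hSdom⟩ := isMaxIndepOn_iff.1 hS
  obtain ⟨hMD, hMI, hMdom⟩ := isMaxIndepOn_iff.1 hM
  refine isMaxIndep_iff.2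
    ⟨isIndep_union.2 ⟨hSI, hMI, fun s hs m hm hsm => not_adj_of_mem_dSet (hMD hm) (hSA hs)
      hsm.symm⟩, fun x hx => ?_⟩
  have hxS : x ∉ S := fun h => hx (Or.inl h)
  have hxM : x ∉ M := fun h => hx (Or.inr h)
  by_cases hxv : x = v
  · obtain ⟨m, hm⟩ := hM.nonempty hD
    exact ⟨m, Or.inr hm, hxv ▸ (hMD hm).1⟩
  by_cases hvx : G.Adj v x
  · by_cases hxD : x ∈ dSet G v
    · obtain ⟨m, hm, hxm⟩ := hMdom x hxD hxM
      exact ⟨m, Or.inr hm, hxm⟩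
    · obtain ⟨s, hs, hxs⟩ := hdom x hvx hxD
      exact ⟨s, Or.inl hs, hxs⟩
  · obtain ⟨s, hs, hxs⟩ := hSdom x (notMem_cnbhd_singleton.2 ⟨hxv, hvx⟩) hxS
    exact ⟨s, Or.inl hs, hxs⟩

end Extension

end WC

theorem stmt_7_general {V : Type*} [Fintype V] (G : SimpleGraph V)
    (h5 : ¬ HasCycleLen G 5) (w : V → ℝ) (hw : WWC G w)
    (v : V) (hD : (dSet G v).Nonempty)
    (M : Set V) (hM : IsMaxIndepOn G (dSet G v) M) :
    w v = wsum w M := by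
  obtain ⟨Y, hYn2, hY, hYdom⟩ := exists_isIndep_subset_n2_dominating h5 v
  obtain ⟨S, hYS, hS⟩ := hY.exists_isMaxIndepOn_superset fun y hy => (hYn2 hy).1
  have hSdom : ∀ u, G.Adj v u → u ∉ dSet G v → ∃ s ∈ S, G.Adj u s := fun u hu hu' =>
    let ⟨y, hy, huy⟩ := hYdom u hu hu'
    ⟨y, hYS hy, huy⟩
  have hweights := hw _ _ (isMaxIndep_union_singleton hS)
    (isMaxIndep_union_of_isMaxIndepOn_dSet hS hSdom hM hD)
  have hSv : Disjoint S {v} := disjoint_compl_left.mono hS.1 Set.subset_union_left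
  have hSM : Disjoint S M :=
    disjoint_compl_left.mono hS.1 (hM.1.trans (Set.sdiff_subset.trans neighborSet_subset_cnbhd))
  rw [wsum_union w hSv, wsum_union w hSM, wsum_singleton] at hweights
  linarith

/-- in a `w`-well-covered graph with no `C₅`, for every vertex
`v ∉ L(G)` with `D(v) ≠ ∅` and every maximal independent set `M` of the
subgraph induced by `D(v)`, we have `w(v) = w(M)`. -/
theorem stmt_7 {V : Type*} [Fintype V] (G : SimpleGraph V)
    (h5 : ¬ HasCycleLen G 5) (w : V → ℝ) (hw : WWC G w)
    (v : V) (hv : v ∉ lSet G) (hD : (dSet G v).Nonempty)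
    (M : Set V) (hM : IsMaxIndepOn G (dSet G v) M) :
    w v = wsum w M :=
  stmt_7_general G h5 w hw v hD M hM
end

section
/- Let G = (V,E) be a finite simple graph containing no cycle of length 4, no cycle of length 5, and no cycle of length 6 (as subgraphs, not necessarily induced). If L(G) = ∅, then every edge of G is a relating edge. (In particular, L(G) = ∅ implies D(v) = ∅ for every vertex v.) -/
open WC

/-!
Without a `C₄` the ends of an edge `xa` have at most one common neighbour, so `L(G) = ∅` forces
every neighbour `a` of `x` to have a neighbour outside `N[x]`; this alone empties `D(x)`.

For an edge `xy`, give every `a ∈ N(x) \ N[y]` and every `a ∈ N(y) \ N[x]` such a neighbour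
`f a ∉ N[{x, y}]`. No two chosen vertices are adjacent, since `f a ~ f b` would close the cycle
`x a (f a) (f b) b` of length 5 (same side) or `x a (f a) (f b) b y` of length 6 (opposite sides).
Extend them to a maximal independent subset `S` of `V \ N[{x, y}]`; then every vertex outside
`N[x]` lies in or next to `S`, and likewise for `N[y]`, so `S ∪ {x}` and `S ∪ {y}` are both maximal.
-/

namespace WC

open SimpleGraph

variable {V : Type*} {G : SimpleGraph V}

section Cycles

variable {a b c d e f : V}

theorem hasCycleLen_four (hab : G.Adj a b) (hbc : G.Adj b c) (hcd : G.Adj c d)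
    (hda : G.Adj d a) (hac : a ≠ c) (hbd : b ≠ d) : HasCycleLen G 4 := by
  refine ⟨a, .cons hab (.cons hbc (.cons hcd (.cons hda .nil))), ?_, rfl⟩
  have := hab.ne; have := hbc.ne; have := hcd.ne; have := hda.ne
  simp_all [Walk.cons_isCycle_iff, Walk.isPath_def, eq_comm]

theorem hasCycleLen_five (hab : G.Adj a b) (hbc : G.Adj b c) (hcd : G.Adj c d)
    (hde : G.Adj d e) (hea : G.Adj e a) (hac : a ≠ c) (had : a ≠ d) (hbd : b ≠ d)
    (hbe : b ≠ e) (hce : c ≠ e) : HasCycleLen G 5 := by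
  refine ⟨a, .cons hab (.cons hbc (.cons hcd (.cons hde (.cons hea .nil)))), ?_, rfl⟩
  have := hab.ne; have := hbc.ne; have := hcd.ne; have := hde.ne; have := hea.ne
  simp_all [Walk.cons_isCycle_iff, Walk.isPath_def, eq_comm]

theorem hasCycleLen_six (hab : G.Adj a b) (hbc : G.Adj b c) (hcd : G.Adj c d)
    (hde : G.Adj d e) (hef : G.Adj e f) (hfa : G.Adj f a) (hac : a ≠ c) (had : a ≠ d)
    (hae : a ≠ e) (hbd : b ≠ d) (hbe : b ≠ e) (hbf : b ≠ f) (hce : c ≠ e) (hcf : c ≠ f)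
    (hdf : d ≠ f) : HasCycleLen G 6 := by
  refine ⟨a, .cons hab (.cons hbc (.cons hcd (.cons hde (.cons hef (.cons hfa .nil))))), ?_, rfl⟩
  have := hab.ne; have := hbc.ne; have := hcd.ne; have := hde.ne; have := hef.ne; have := hfa.ne
  simp_all [Walk.cons_isCycle_iff, Walk.isPath_def, eq_comm]

end Cycles

section MaximalIndependentSets

variable {A S T : Set V}

theorem isMaxIndep_of_forall_exists_adj (hS : IsIndep G S)
    (hdom : ∀ v ∉ S, ∃ u ∈ S, G.Adj u v) : IsMaxIndep G S := by
  refine ⟨hS, fun T hT hST => (Set.Subset.antisymm ?_ hST)⟩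
  intro v hv
  by_contra hvS
  obtain ⟨u, hu, huv⟩ := hdom v hvS
  exact hT (hST hu) hv huv.ne huv

theorem exists_isMaxIndepOn_superset (hTA : T ⊆ A) (hT : IsIndep G T) :
    ∃ S, T ⊆ S ∧ IsMaxIndepOn G A S := by
  let F : Set (Set V) := {U | U ⊆ A ∧ IsIndep G U}
  have hchain : ∀ c ⊆ F, IsChain (· ⊆ ·) c → c.Nonempty → ∃ ub ∈ F, ∀ s ∈ c, s ⊆ ub :=
    fun c hcF hc _ => ⟨⋃₀ c, ⟨Set.sUnion_subset fun s hs => (hcF hs).1,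
      (Set.pairwise_sUnion hc.directedOn).2 fun s hs => (hcF hs).2⟩,
      fun _ => Set.subset_sUnion_of_mem⟩
  obtain ⟨S, hTS, hS⟩ := zorn_subset_nonempty F hchain T ⟨hTA, hT⟩
  exact ⟨S, hTS, hS.prop.1, hS.prop.2, fun U hUA hU hSU => (hS.eq_of_subset ⟨hUA, hU⟩ hSU).symm⟩

theorem IsMaxIndepOn.exists_adj (hS : IsMaxIndepOn G A S) {v : V} (hvA : v ∈ A)
    (hvS : v ∉ S) : ∃ s ∈ S, G.Adj v s := by
  by_contra! hno
  have hind : IsIndep G (insert v S) :=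
    hS.2.1.insert fun s hs _ => ⟨hno s hs, fun h => hno s hs h.symm⟩
  have hSv : insert v S = S := hS.2.2 _ (Set.insert_subset hvA hS.1) hind (Set.subset_insert v S)
  exact hvS (hSv ▸ Set.mem_insert v S)

end MaximalIndependentSets

theorem commonNeighbors_subsingleton (h4 : ¬ HasCycleLen G 4) {x a : V} (hxa : x ≠ a) :
    (G.commonNeighbors x a).Subsingleton := by
  intro r hr s hs
  by_contra hrs
  rw [mem_commonNeighbors] at hr hs
  exact h4 (hasCycleLen_four hr.1 hr.2.symm hs.2 hs.1.symm hxa hrs)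

theorem exists_adj_ne_not_adj (hL : lSet G = ∅) (h4 : ¬ HasCycleLen G 4) {x a : V}
    (hxa : G.Adj x a) : ∃ r, G.Adj a r ∧ r ≠ x ∧ ¬ G.Adj x r := by
  by_contra! h
  have hN : G.neighborSet a = insert x (G.commonNeighbors x a) := by
    ext r
    simp only [mem_neighborSet, Set.mem_insert_iff, mem_commonNeighbors]
    refine ⟨fun har => or_iff_not_imp_left.2 fun hrx => ⟨h r har hrx, har⟩, ?_⟩
    rintro (rfl | ⟨-, har⟩)
    exacts [hxa.symm, har]
  have haL : a ∈ lSet G := by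
    rcases (commonNeighbors_subsingleton h4 hxa.ne).eq_empty_or_singleton with hC | ⟨r, hC⟩
    · left
      rw [hN, hC, insert_empty_eq, Set.ncard_singleton]
    · have hr : G.Adj x r ∧ G.Adj a r := (G.mem_commonNeighbors).1 (hC ▸ rfl)
      right
      exact ⟨by rw [hN, hC, Set.ncard_pair hr.1.ne], x, r, hxa.symm, hr.2, hr.1⟩
  simp [hL] at haL

theorem dSet_eq_empty (hL : lSet G = ∅) (h4 : ¬ HasCycleLen G 4) (v : V) : dSet G v = ∅ := by
  refine Set.eq_empty_of_forall_notMem fun u hu => hu.2 ?_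
  obtain ⟨w, huw, hwv, hvw⟩ := exists_adj_ne_not_adj hL h4 hu.1
  refine ⟨fun hu₂ => hu₂.1 (Or.inr ⟨v, rfl, hu.1.symm⟩), w, ⟨?_, u, ⟨hu.1.ne', v, rfl, hu.1.symm⟩,
    huw.symm⟩, huw⟩
  rintro (h | ⟨s, rfl, hws⟩)
  exacts [hwv h, hvw hws.symm]

/-- `N(x) \ N[y]`. -/
def exclusiveNbhd (G : SimpleGraph V) (x y : V) : Set V :=
  {a | G.Adj x a ∧ a ≠ y ∧ ¬ G.Adj y a}

/-- `V \ N[{x, y}]`. -/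
def farFromEdge (G : SimpleGraph V) (x y : V) : Set V :=
  {r | r ≠ x ∧ r ≠ y ∧ ¬ G.Adj x r ∧ ¬ G.Adj y r}

section Edge

variable {x y a b ra rb : V}

theorem farFromEdge_comm : farFromEdge G x y = farFromEdge G y x := by
  ext r
  simp only [farFromEdge, Set.mem_ofPred_eq]
  tauto

theorem exists_adj_farFromEdge (hL : lSet G = ∅) (h4 : ¬ HasCycleLen G 4) (hxy : G.Adj x y)
    (ha : a ∈ exclusiveNbhd G x y) : ∃ r ∈ farFromEdge G x y, G.Adj a r := by
  obtain ⟨hxa, hay, hya⟩ := ha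
  obtain ⟨r, har, hrx, hxr⟩ := exists_adj_ne_not_adj hL h4 hxa
  have hry : r ≠ y := by
    rintro rfl
    exact hya har.symm
  have hyr : ¬ G.Adj y r := fun hyr => h4 (hasCycleLen_four hxa har hyr.symm hxy.symm hrx.symm hay)
  exact ⟨r, ⟨hrx, hry, hxr, hyr⟩, har⟩

theorem not_adj_of_mem_exclusiveNbhd_same (h5 : ¬ HasCycleLen G 5)
    (ha : a ∈ exclusiveNbhd G x y) (hb : b ∈ exclusiveNbhd G x y) (hab : a ≠ b)
    (hra : ra ∈ farFromEdge G x y) (hrb : rb ∈ farFromEdge G x y)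
    (hara : G.Adj a ra) (hbrb : G.Adj b rb) : ¬ G.Adj ra rb := fun h =>
  h5 (hasCycleLen_five ha.1 hara h hbrb.symm hb.1.symm hra.1.symm hrb.1.symm
    (fun h => hrb.2.2.1 (h ▸ ha.1)) hab (fun h => hra.2.2.1 (h ▸ hb.1)))

theorem not_adj_of_mem_exclusiveNbhd_opp (h6 : ¬ HasCycleLen G 6) (hxy : G.Adj x y)
    (ha : a ∈ exclusiveNbhd G x y) (hb : b ∈ exclusiveNbhd G y x)
    (hra : ra ∈ farFromEdge G x y) (hrb : rb ∈ farFromEdge G x y)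
    (hara : G.Adj a ra) (hbrb : G.Adj b rb) : ¬ G.Adj ra rb := fun h =>
  h6 (hasCycleLen_six ha.1 hara h hbrb.symm hb.1.symm hxy.symm hra.1.symm hrb.1.symm
    hb.2.1.symm (fun h => hrb.2.2.1 (h ▸ ha.1)) (fun h => hb.2.2 (h ▸ ha.1)) ha.2.1
    (fun h => hra.2.2.2 (h ▸ hb.1)) hra.2.1 hrb.2.1)
theorem exists_indep_adj_exclusiveNbhd (hL : lSet G = ∅) (h4 : ¬ HasCycleLen G 4)
    (h5 : ¬ HasCycleLen G 5) (h6 : ¬ HasCycleLen G 6) (hxy : G.Adj x y) :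
    ∃ T ⊆ farFromEdge G x y, IsIndep G T ∧
      ∀ a ∈ exclusiveNbhd G x y ∪ exclusiveNbhd G y x, ∃ t ∈ T, G.Adj a t := by
  have hfar : ∀ a ∈ exclusiveNbhd G x y ∪ exclusiveNbhd G y x,
      ∃ r ∈ farFromEdge G x y, G.Adj a r := by
    rintro a (ha | ha)
    · exact exists_adj_farFromEdge hL h4 hxy ha
    · exact farFromEdge_comm (G := G) ▸ exists_adj_farFromEdge hL h4 hxy.symm ha
  choose! f hf hadj using hfar
  refine ⟨f '' (exclusiveNbhd G x y ∪ exclusiveNbhd G y x), Set.image_subset_iff.2 hf, ?_,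
    fun a ha => ⟨f a, Set.mem_image_of_mem f ha, hadj a ha⟩⟩
  rintro _ ⟨a, ha, rfl⟩ _ ⟨b, hb, rfl⟩ hne
  have hab : a ≠ b := by
    rintro rfl
    exact hne rfl
  have hfa := hf a ha
  have hfb := hf b hb
  have hafa := hadj a ha
  have hbfb := hadj b hb
  rcases ha with ha | ha <;> rcases hb with hb | hb
  · exact not_adj_of_mem_exclusiveNbhd_same h5 ha hb hab hfa hfb hafa hbfb
  · exact not_adj_of_mem_exclusiveNbhd_opp h6 hxy ha hb hfa hfb hafa hbfb
  · exact fun h => not_adj_of_mem_exclusiveNbhd_opp h6 hxy hb ha hfb hfa hbfb hafa h.symm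
  · rw [farFromEdge_comm] at hfa hfb
    exact not_adj_of_mem_exclusiveNbhd_same h5 ha hb hab hfa hfb hafa hbfb

theorem isMaxIndep_union_singleton_s14 {S : Set V} (hxy : G.Adj x y)
    (hS : IsMaxIndepOn G (farFromEdge G x y) S)
    (hdom : ∀ b ∈ exclusiveNbhd G y x, ∃ s ∈ S, G.Adj b s) : IsMaxIndep G (S ∪ {x}) := by
  have hSfar : ∀ s ∈ S, ¬ G.Adj x s := fun s hs => (hS.1 hs).2.2.1
  rw [Set.union_singleton]
  refine isMaxIndep_of_forall_exists_adj
    (hS.2.1.insert fun s hs _ => ⟨hSfar s hs, fun h => hSfar s hs h.symm⟩) fun v hv => ?_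
  rw [Set.mem_insert_iff, not_or] at hv
  by_cases hxv : G.Adj x v
  · exact ⟨x, Set.mem_insert x S, hxv⟩
  by_cases hvy : v = y
  · exact ⟨x, Set.mem_insert x S, hvy ▸ hxy⟩
  by_cases hyv : G.Adj y v
  · obtain ⟨s, hs, hvs⟩ := hdom v ⟨hyv, hv.1, hxv⟩
    exact ⟨s, Set.mem_insert_of_mem x hs, hvs.symm⟩
  · obtain ⟨s, hs, hvs⟩ := hS.exists_adj ⟨hv.1, hvy, hxv, hyv⟩ hv.2
    exact ⟨s, Set.mem_insert_of_mem x hs, hvs.symm⟩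

theorem isRelating_of_adj (hL : lSet G = ∅) (h4 : ¬ HasCycleLen G 4) (h5 : ¬ HasCycleLen G 5)
    (h6 : ¬ HasCycleLen G 6) (hxy : G.Adj x y) : IsRelating G x y := by
  obtain ⟨T, hTfar, hT, hTdom⟩ := exists_indep_adj_exclusiveNbhd hL h4 h5 h6 hxy
  obtain ⟨S, hTS, hS⟩ := exists_isMaxIndepOn_superset hTfar hT
  have hdom : ∀ a ∈ exclusiveNbhd G x y ∪ exclusiveNbhd G y x, ∃ s ∈ S, G.Adj a s :=
    fun a ha => (hTdom a ha).imp fun _ ht => ⟨hTS ht.1, ht.2⟩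
  exact ⟨hxy, S, hS.2.1, isMaxIndep_union_singleton_s14 hxy hS fun b hb => hdom b (.inr hb),
    isMaxIndep_union_singleton_s14 hxy.symm (farFromEdge_comm (G := G) ▸ hS)
      fun a ha => hdom a (.inl ha)⟩

end Edge

end WC

theorem stmt_14_general {V : Type*} (G : SimpleGraph V)
    (h4 : ¬ HasCycleLen G 4) (h5 : ¬ HasCycleLen G 5) (h6 : ¬ HasCycleLen G 6)
    (hL : lSet G = ∅) :
    (∀ x y : V, G.Adj x y → IsRelating G x y) ∧ (∀ v : V, dSet G v = ∅) :=
  ⟨fun _ _ => isRelating_of_adj hL h4 h5 h6, dSet_eq_empty hL h4⟩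

/-- in a graph with no `C₄`, `C₅`, `C₆`, if `L(G) = ∅` then every
edge of `G` is relating (in particular, `D(v) = ∅` for every vertex `v`). -/
theorem stmt_14 {V : Type*} [Fintype V] (G : SimpleGraph V)
    (h4 : ¬ HasCycleLen G 4) (h5 : ¬ HasCycleLen G 5) (h6 : ¬ HasCycleLen G 6)
    (hL : lSet G = ∅) :
    (∀ x y : V, G.Adj x y → IsRelating G x y) ∧ (∀ v : V, dSet G v = ∅) :=
  stmt_14_general G h4 h5 h6 hL
end
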